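/- Let t > 0, x < 0, p ∈ [0, 1/4] and φ(ξ) = tξ³ + xξ − p x²/(4ξ t). Then φ'''(ξ) = 6t + (3 p x²/(2t)) ξ^{−4} > 0 for all ξ ≠ 0, and consequently |φ'(ξ)| ≥ |x|/8 for all ξ with p|x|/(2t) < ξ² ≤ |x|/(6t). -/
import Mathlib


/-- Convexity and lower bound for the phase derivative: with
`φ(ξ) = tξ³ + xξ − p x²/(4ξt)` one has `φ'''(ξ) = 6t + (3px²/(2t))ξ⁻⁴ > 0` for `ξ ≠ 0`,
and consequently `|φ'(ξ)| ≥ |x|/8` whenever `p|x|/(2t) < ξ² ≤ |x|/(6t)`. -/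
theorem phase_derivative_lower_bound (t x p : ℝ) (ht : 0 < t) (hx : x < 0)
    (hp0 : 0 ≤ p) (hp1 : p ≤ 1 / 4) :
    (∀ ξ : ℝ, ξ ≠ 0 → 0 < 6 * t + (3 * p * x ^ 2 / (2 * t)) / ξ ^ 4)
      ∧ (∀ ξ : ℝ, p * |x| / (2 * t) < ξ ^ 2 → ξ ^ 2 ≤ |x| / (6 * t) →
          |x| / 8 ≤ |3 * t * ξ ^ 2 + x + p * x ^ 2 / (4 * ξ ^ 2 * t)|) := by
  constructor
  · intro ξ hξ
    have h4 : 0 < ξ ^ 4 := by positivity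
    have h1 : (0:ℝ) ≤ (3 * p * x ^ 2 / (2 * t)) / ξ ^ 4 := by positivity
    linarith
  · intro ξ ha hb
    have habs : |x| = -x := abs_of_neg hx
    rw [habs] at ha hb ⊢
    have hu : 0 < ξ ^ 2 := lt_of_le_of_lt (div_nonneg (mul_nonneg hp0 (by linarith)) (by positivity)) ha
    have ha' : p * (-x) < ξ ^ 2 * (2 * t) := (div_lt_iff₀ (by positivity)).mp ha
    have hb' : ξ ^ 2 * (6 * t) ≤ -x := (le_div_iff₀ (by positivity)).mp hb
    have h4ut : 0 < 4 * ξ ^ 2 * t := by positivity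
    have key : p * x ^ 2 / (4 * ξ ^ 2 * t) ≤ x / 8 - 3 * t * ξ ^ 2 - x := by
      rw [div_le_iff₀ h4ut]
      nlinarith [mul_nonneg (by linarith : (0:ℝ) ≤ ξ ^ 2 * (2 * t) + p * x)
          (by linarith : (0:ℝ) ≤ -x - ξ ^ 2 * (6 * t)),
        mul_nonneg (by linarith : (0:ℝ) ≤ 3 / 2 - 6 * p)
          (mul_nonneg (mul_nonneg ht.le hu.le) (by linarith : (0:ℝ) ≤ -x))]
    have hf : 3 * t * ξ ^ 2 + x + p * x ^ 2 / (4 * ξ ^ 2 * t) ≤ x / 8 := by linarith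
    have := neg_le_abs (3 * t * ξ ^ 2 + x + p * x ^ 2 / (4 * ξ ^ 2 * t))
    linarith
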